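/- In Picaria, player X cannot win moving from a Loop position: for every symmetry g of the square board (an element of the dihedral group of order 8 acting on Fin 3 × Fin 3), the state (g · L, X) with X to move is not in WinningFor X, where L is the Loop configuration. -/

import Mathlib

/-- The two players of Picaria. -/
inductive Player : Type
  | X : Player
  | O : Player
deriving DecidableEq

instance instFintypePlayer : Fintype Player :=
  ⟨{Player.X, Player.O}, by intro x; cases x <;> decide⟩

/-- The opponent of a player. -/
def Player.other : Player → Player
  | Player.X => Player.O
  | Player.O => Player.X

/-- A cell of the 3×3 board, written (row, column), 0-indexed. -/
abbrev Cell : Type := Fin 3 × Fin 3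

/-- A configuration assigns to each cell an optional stone. -/
abbrev Config : Type := Cell → Option Player

/-- King-move adjacency on the board: distinct cells whose coordinates
differ by at most 1 each. -/
def adjacent (a b : Cell) : Prop :=
  a ≠ b ∧ |((a.1 : ℕ) : ℤ) - ((b.1 : ℕ) : ℤ)| ≤ 1 ∧
    |((a.2 : ℕ) : ℤ) - ((b.2 : ℕ) : ℤ)| ≤ 1

/-- The 8 lines of the board: 3 rows, 3 columns, 2 main diagonals. -/
def lines : List (Cell × Cell × Cell) :=
  [((0,0),(0,1),(0,2)), ((1,0),(1,1),(1,2)), ((2,0),(2,1),(2,2)),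
   ((0,0),(1,0),(2,0)), ((0,1),(1,1),(2,1)), ((0,2),(1,2),(2,2)),
   ((0,0),(1,1),(2,2)), ((0,2),(1,1),(2,0))]

/-- Player `p` has three-in-a-row in configuration `c`. -/
def threeInARow (c : Config) (p : Player) : Prop :=
  ∃ l ∈ lines, c l.1 = some p ∧ c l.2.1 = some p ∧ c l.2.2 = some p

/-- The number of stones of player `p` on the board. -/
def stoneCount (c : Config) (p : Player) : ℕ :=
  (Finset.univ.filter fun x : Cell => c x = some p).card

/-- Legal moves of player `t` from configuration `c`, producing `c'`:
placement on an empty cell while `t` has fewer than 3 stones on the board;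
otherwise a slide of one of `t`'s stones to an adjacent empty cell. -/
def Move (t : Player) (c c' : Config) : Prop :=
  (stoneCount c t < 3 ∧ ∃ x : Cell, c x = none ∧ c' = Function.update c x (some t)) ∨
  (3 ≤ stoneCount c t ∧ ∃ x y : Cell, c x = some t ∧ c y = none ∧ adjacent x y ∧
    c' = Function.update (Function.update c x none) y (some t))

/-- `WinningFor p` is the least set of states (configuration, player to move) such that:
(i) `(c, p)` is winning for `p` if some legal move of `p` immediately makes a
three-in-a-row for `p`, or leads to a state winning for `p`;
(ii) `(c, q)` (for `q` the opponent of `p`) is winning for `p` if `q` has at least one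
legal move, and every legal move of `q` yields a configuration with no three-in-a-row
for `q` together with a state winning for `p`. -/
inductive WinningFor (p : Player) : Config × Player → Prop
  | moveWin (c c' : Config) (h : Move p c c') (hw : threeInARow c' p) :
      WinningFor p (c, p)
  | moveStep (c c' : Config) (h : Move p c c') (hw : WinningFor p (c', p.other)) :
      WinningFor p (c, p)
  | forced (c : Config) (hne : ∃ c', Move p.other c c')
      (hnowin : ∀ c', Move p.other c c' → ¬ threeInARow c' p.other)
      (hall : ∀ c', Move p.other c c' → WinningFor p (c', p)) :
      WinningFor p (c, p.other)

/-- The quarter-turn rotation of the 3×3 board: (i, j) ↦ (j, 2 − i). -/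
def rot : Equiv.Perm Cell where
  toFun x := (x.2, 2 - x.1)
  invFun x := (2 - x.2, x.1)
  left_inv := by intro x; fin_cases x <;> rfl
  right_inv := by intro x; fin_cases x <;> rfl

/-- The reflection of the 3×3 board: (i, j) ↦ (i, 2 − j). -/
def reflB : Equiv.Perm Cell where
  toFun x := (x.1, 2 - x.2)
  invFun x := (x.1, 2 - x.2)
  left_inv := by intro x; fin_cases x <;> rfl
  right_inv := by intro x; fin_cases x <;> rfl

/-- The dihedral group of order 8, acting on the board as its symmetries. -/
def D4 : Subgroup (Equiv.Perm Cell) := Subgroup.closure {rot, reflB}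

/-- The action of a board symmetry on configurations: (g · c)(x) = c(g⁻¹ x). -/
def smulConfig (g : Equiv.Perm Cell) (c : Config) : Config := fun x => c (g⁻¹ x)
/-- The Loop configuration. -/
def L : Config := fun x =>
  if x = ((0 : Fin 3), (2 : Fin 3)) then some Player.O
  else if x = ((1 : Fin 3), (0 : Fin 3)) then some Player.O
  else if x = ((1 : Fin 3), (1 : Fin 3)) then some Player.X
  else if x = ((1 : Fin 3), (2 : Fin 3)) then some Player.X
  else if x = ((2 : Fin 3), (0 : Fin 3)) then some Player.X
  else if x = ((2 : Fin 3), (2 : Fin 3)) then some Player.O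
  else none

def sX : List Nat := [1661, 1663, 1905, 1985, 1987, 2063, 2067, 4169, 4227, 4245, 4303, 4305, 4321, 4323, 4329, 4577, 4773, 4801, 4811, 4827, 4955, 4973, 5153, 5207, 5219, 5257, 5259, 5279, 5297, 5303, 5323, 5369, 5407, 5499, 5529, 5553, 5699, 5927, 5947, 8547, 8597, 8615, 8677, 8679, 8697, 10703, 10707, 10775, 10779, 10855, 10857, 10881, 10985, 11039, 11129, 11145, 11283, 11331, 11359, 11361, 11385, 11463, 11487, 11507, 11513, 11531, 11613, 11739, 11805, 11817, 11881, 11883, 11967, 12183, 12207, 12233, 12237, 12321, 12479, 13441, 13507, 13519, 13543, 13549, 13561, 14005, 14071, 14077, 14155, 14247, 14313, 14677, 14959, 14967, 15175, 15183, 15451, 15513, 15529, 15535, 15537, 15693, 15721, 15769, 15771, 15777, 16099, 16111, 16179, 16191, 16257, 16263, 16497, 16801, 16831, 16855, 16863, 16933, 16941, 16957, 17025, 17181, 17599, 18327]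

def sO : List Nat := [1879, 1895, 1897, 1901, 1985, 1987, 2039, 2041, 2057, 2059, 2063, 2067, 2143, 2145, 3821, 3823, 3849, 4065, 4145, 4147, 4163, 4165, 4169, 4173, 4219, 4223, 4227, 4241, 4297, 4303, 4305, 4321, 4323, 4329, 4505, 4577, 4667, 4693, 4721, 4759, 4771, 4801, 4811, 4817, 4825, 4827, 4901, 4979, 4983, 5007, 5147, 5153, 5173, 5179, 5207, 5231, 5245, 5257, 5259, 5279, 5297, 5303, 5313, 5329, 5369, 5381, 5393, 5419, 5421, 5447, 5487, 5499, 5513, 5519, 5527, 5529, 5537, 5553, 5563, 5565, 5603, 5621, 5627, 5675, 5703, 5727, 5873, 5875, 5951, 6089, 6109, 6161, 6167, 8223, 8519, 8521, 8537, 8543, 8547, 8591, 8597, 8601, 8615, 8619, 8671, 8677, 8679, 8695, 8697, 8703, 10697, 10699, 10703, 10707, 10721, 10725, 10775, 10779, 10855, 10857, 10863, 10881, 10985, 11039, 11063, 11091, 11119, 11129, 11135, 11143, 11145, 11201, 11203, 11225, 11229, 11251, 11253, 11279, 11319, 11359, 11361, 11369, 11385, 11435, 11437, 11453, 11459, 11485,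 11507, 11513, 11517, 11531, 11535, 11559, 11565, 11587, 11611, 11619, 11687, 11699, 11725, 11733, 11737, 11739, 11805, 11817, 11831, 11847, 11871, 11881, 11883, 11889, 11931, 11967, 11979, 12087, 12123, 12155, 12157, 12161, 12165, 12179, 12183, 12205, 12213, 12233, 12237, 12285, 12315, 12407, 12425, 12427, 12485, 12503, 12641, 12719, 13273, 13279, 13327, 13435, 13441, 13507, 13519, 13521, 13561, 13569, 13573, 13575, 13585, 13591, 13593, 13921, 13927, 13993, 14005, 14007, 14055, 14071, 14077, 14079, 14155, 14167, 14169, 14235, 14247, 14263, 14311, 14313, 14319, 14623, 14695, 14703, 14719, 14725, 14727, 14773, 14781, 14839, 14857, 14865, 14881, 14887, 14889, 14911, 14919, 14961, 14989, 14997, 15013, 15021, 15097, 15103, 15105, 15151, 15157, 15159, 15177, 15379, 15385, 15451, 15459, 15463, 15487, 15493, 15505, 15529, 15535, 15537, 15613, 15621, 15625, 15705, 15721, 15747, 15769, 15771, 15777, 16099, 16107, 16111, 16113, 16179, 16191, 16215, 16255, 16257, 16263, 16341, 16353, 16497, 16783, 16801, 16809, 16825, 16833, 16855, 16863, 16881,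 16903, 16911, 16933, 16939, 16941, 16957, 16959, 16965, 17017, 17025, 17065, 17073, 17097, 17173, 17175, 17181, 17281, 17289, 17335, 17343, 17545, 17623, 17625, 17761, 17839, 18247, 18273, 18325, 18351, 18489, 18567]
def pval : Option Player → ℕ
  | none => 0
  | some Player.X => 1
  | some Player.O => 2

def unval (k : ℕ) : Option Player :=
  if k = 1 then some Player.X else if k = 2 then some Player.O else none

def idx (x : Cell) : ℕ := 3 * x.1.val + x.2.val

def dec (n : ℕ) : Config := fun x => unval (n / 3 ^ idx x % 3)

def enc (c : Config) : ℕ :=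
  pval (c (0,0)) + 3*(pval (c (0,1)) + 3*(pval (c (0,2)) + 3*(pval (c (1,0)) +
    3*(pval (c (1,1)) + 3*(pval (c (1,2)) + 3*(pval (c (2,0)) + 3*(pval (c (2,1)) +
    3*(pval (c (2,2))))))))))

lemma pval_lt (o : Option Player) : pval o < 3 := by
  rcases o with _ | p
  · simp [pval]
  · cases p <;> simp [pval]

lemma unval_pval (o : Option Player) : unval (pval o) = o := by
  rcases o with _ | p
  · rfl
  · cases p <;> rfl

lemma dec_enc_cell (c : Config) (x : Cell) (h : enc c / 3 ^ idx x % 3 = pval (c x)) :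
    dec (enc c) x = c x := by
  show unval _ = _
  rw [h, unval_pval]

lemma dec_enc (c : Config) : dec (enc c) = c := by
  have h0 := pval_lt (c (0,0)); have h1 := pval_lt (c (0,1)); have h2 := pval_lt (c (0,2))
  have h3 := pval_lt (c (1,0)); have h4 := pval_lt (c (1,1)); have h5 := pval_lt (c (1,2))
  have h6 := pval_lt (c (2,0)); have h7 := pval_lt (c (2,1)); have h8 := pval_lt (c (2,2))
  funext x
  fin_cases x
  · exact dec_enc_cell c _ (show enc c / 1 % 3 = pval (c (0,0)) by simp only [enc]; omega)
  · exact dec_enc_cell c _ (show enc c / 3 % 3 = pval (c (0,1)) by simp only [enc]; omega)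
  · exact dec_enc_cell c _ (show enc c / 9 % 3 = pval (c (0,2)) by simp only [enc]; omega)
  · exact dec_enc_cell c _ (show enc c / 27 % 3 = pval (c (1,0)) by simp only [enc]; omega)
  · exact dec_enc_cell c _ (show enc c / 81 % 3 = pval (c (1,1)) by simp only [enc]; omega)
  · exact dec_enc_cell c _ (show enc c / 243 % 3 = pval (c (1,2)) by simp only [enc]; omega)
  · exact dec_enc_cell c _ (show enc c / 729 % 3 = pval (c (2,0)) by simp only [enc]; omega)
  · exact dec_enc_cell c _ (show enc c / 2187 % 3 = pval (c (2,1)) by simp only [enc]; omega)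
  · exact dec_enc_cell c _ (show enc c / 6561 % 3 = pval (c (2,2)) by simp only [enc]; omega)
def upd (c : Config) (x y : Cell) (t : Player) : Config :=
  Function.update (Function.update c x none) y (some t)

set_option maxRecDepth 100000 in
lemma CL0 : (∀ n ∈ sX, stoneCount (dec n) Player.X = 3) ∧
    (∀ m ∈ sO, stoneCount (dec m) Player.O = 3) := by decide

instance (a b : Cell) : Decidable (adjacent a b) := by unfold adjacent; infer_instance
instance (c : Config) (p : Player) : Decidable (threeInARow c p) := by
  unfold threeInARow; infer_instance

set_option maxRecDepth 1000000 in
set_option maxHeartbeats 4000000 in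
lemma CL1 : ∀ n ∈ sX, ∀ x y : Cell, dec n x = some Player.X → dec n y = none → adjacent x y →
    ¬ threeInARow (upd (dec n) x y Player.X) Player.X ∧ enc (upd (dec n) x y Player.X) ∈ sO := by
  decide

set_option maxRecDepth 1000000 in
set_option maxHeartbeats 8000000 in
lemma CL2 : ∀ m ∈ sO,
    (∀ x y : Cell, ¬ (dec m x = some Player.O ∧ dec m y = none ∧ adjacent x y)) ∨
    ∃ x y : Cell, dec m x = some Player.O ∧ dec m y = none ∧ adjacent x y ∧
      (threeInARow (upd (dec m) x y Player.O) Player.O ∨ enc (upd (dec m) x y Player.O) ∈ sX) := by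
  decide

lemma move_slide {t : Player} {c c' : Config} (h3 : stoneCount c t = 3) (h : Move t c c') :
    ∃ x y, c x = some t ∧ c y = none ∧ adjacent x y ∧ c' = upd c x y t := by
  rcases h with ⟨hlt, -⟩ | ⟨-, x, y, hx, hy, ha, he⟩
  · omega
  · exact ⟨x, y, hx, hy, ha, he⟩

lemma not_win : ∀ s, WinningFor Player.X s →
    ¬ ((s.2 = Player.X ∧ enc s.1 ∈ sX) ∨ (s.2 = Player.O ∧ enc s.1 ∈ sO)) := by
  intro s h
  induction h with
  | moveWin c c' hm hw =>
      rintro (⟨-, hc⟩ | ⟨hne, -⟩)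
      · have h3 : stoneCount c Player.X = 3 := by
          have := CL0.1 (enc c) hc; rwa [dec_enc] at this
        obtain ⟨x, y, hx, hy, ha, he⟩ := move_slide h3 hm
        have hcl := CL1 (enc c) hc x y (by rwa [dec_enc]) (by rwa [dec_enc]) ha
        rw [dec_enc] at hcl
        exact hcl.1 (he ▸ hw)
      · exact Player.noConfusion hne
  | moveStep c c' hm hw ih =>
      rintro (⟨-, hc⟩ | ⟨hne, -⟩)
      · have h3 : stoneCount c Player.X = 3 := by
          have := CL0.1 (enc c) hc; rwa [dec_enc] at this
        obtain ⟨x, y, hx, hy, ha, he⟩ := move_slide h3 hm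
        have hcl := CL1 (enc c) hc x y (by rwa [dec_enc]) (by rwa [dec_enc]) ha
        rw [dec_enc] at hcl
        exact ih (Or.inr ⟨rfl, by rw [he]; exact hcl.2⟩)
      · exact Player.noConfusion hne
  | forced c hne hnowin hall ih =>
      rintro (⟨ho, -⟩ | ⟨-, hc⟩)
      · exact Player.noConfusion ho
      · have h3 : stoneCount c Player.X.other = 3 := by
          have := CL0.2 (enc c) hc; rwa [dec_enc] at this
        rcases CL2 (enc c) hc with hno | ⟨x, y, hx, hy, ha, hrest⟩
        · obtain ⟨c'', hmv⟩ := hne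
          obtain ⟨x, y, hx, hy, ha, -⟩ := move_slide h3 hmv
          exact hno x y ⟨by rwa [dec_enc], by rwa [dec_enc], ha⟩
        · rw [dec_enc] at hx hy hrest
          have hmv : Move Player.X.other c (upd c x y Player.O) :=
            Or.inr ⟨h3.ge, x, y, hx, hy, ha, rfl⟩
          rcases hrest with h3iar | hmem
          · exact hnowin _ hmv h3iar
          · exact ih _ hmv (Or.inl ⟨rfl, hmem⟩)

def loopL : List ℕ := [2063, 5207, 8615, 11039, 13519, 14247, 16855, 16863]

def S8 : List Config := loopL.map dec

lemma mem_S8_of_enc {c : Config} (h : enc c ∈ loopL) : c ∈ S8 :=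
  List.mem_map.mpr ⟨enc c, h, dec_enc c⟩

lemma smul_mul (g h : Equiv.Perm Cell) (c : Config) :
    smulConfig (g * h) c = smulConfig g (smulConfig h c) := by
  funext x
  simp [smulConfig, mul_inv_rev, Equiv.Perm.mul_apply]

lemma smul_one (c : Config) : smulConfig 1 c = c := by
  funext x; simp [smulConfig]

set_option maxRecDepth 100000 in
lemma gen_closed' :
    (∀ n ∈ loopL, enc (smulConfig rot (dec n)) ∈ loopL) ∧
    (∀ n ∈ loopL, enc (smulConfig rot⁻¹ (dec n)) ∈ loopL) ∧
    (∀ n ∈ loopL, enc (smulConfig reflB (dec n)) ∈ loopL) ∧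
    (∀ n ∈ loopL, enc (smulConfig reflB⁻¹ (dec n)) ∈ loopL) := by
  decide

lemma lift_gen (σ : Equiv.Perm Cell) (h : ∀ n ∈ loopL, enc (smulConfig σ (dec n)) ∈ loopL) :
    ∀ c ∈ S8, smulConfig σ c ∈ S8 := by
  intro c hc
  obtain ⟨n, hn, rfl⟩ := List.mem_map.mp hc
  exact mem_S8_of_enc (h n hn)

lemma orbit_stable : ∀ g ∈ D4, ∀ c ∈ S8, smulConfig g c ∈ S8 := by
  intro g hg
  refine (Subgroup.closure_induction
    (p := fun g _ => (∀ c ∈ S8, smulConfig g c ∈ S8) ∧ (∀ c ∈ S8, smulConfig g⁻¹ c ∈ S8))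
    ?_ ?_ ?_ ?_ hg).1
  · rintro x (rfl | rfl)
    · exact ⟨lift_gen _ gen_closed'.1, lift_gen _ gen_closed'.2.1⟩
    · exact ⟨lift_gen _ gen_closed'.2.2.1, lift_gen _ gen_closed'.2.2.2⟩
  · constructor <;> intro c hc <;> simpa [inv_one, smul_one] using hc
  · rintro x y _ _ ⟨hx1, hx2⟩ ⟨hy1, hy2⟩
    refine ⟨fun c hc => ?_, fun c hc => ?_⟩
    · rw [smul_mul]; exact hx1 _ (hy1 _ hc)
    · rw [mul_inv_rev, smul_mul]; exact hy2 _ (hx2 _ hc)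
  · rintro x _ ⟨h1, h2⟩
    exact ⟨h2, by simpa [inv_inv] using h1⟩

set_option maxRecDepth 100000 in
lemma loop_sub : ∀ n ∈ loopL, enc (dec n) = n ∧ n ∈ sX := by decide

lemma L_mem : L ∈ S8 :=
  List.mem_map.mpr ⟨14247, by decide, by funext x; fin_cases x <;> rfl⟩


/-- Player X cannot win moving from a Loop position: for every symmetry g of the board,
the image of the Loop configuration under g, with X to move, is not winning for X. -/
theorem picaria_X_cannot_win_from_loop :
    ∀ g ∈ D4, ¬ WinningFor Player.X (smulConfig g L, Player.X) := by
  intro g hg hw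
  have hmem : smulConfig g L ∈ S8 := orbit_stable g hg L L_mem
  obtain ⟨n, hn, hdec⟩ := List.mem_map.mp hmem
  have hlf := loop_sub n hn
  exact not_win _ hw (Or.inl ⟨rfl, by rw [← hdec, hlf.1]; exact hlf.2⟩)
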